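/- arXiv:1403.6288 — 10 statements merged into one kernel-verified Lean document; each statement's English description precedes it below -/
import Mathlib

section
/- For every graph G, the sigma chromatic number of G is at most the chromatic number of G, i.e., σ(G) ≤ χ(G). -/
open Finset
open scoped Classical

def IsSigmaColoring {V : Type*} [Fintype V] (G : SimpleGraph V) (c : V → ℕ) : Prop :=
  (∀ v, 0 < c v) ∧
  ∀ u v, G.Adj u v →
    ∑ w ∈ G.neighborFinset u, c w ≠ ∑ w ∈ G.neighborFinset v, c w

noncomputable def sigmaChrom {V : Type*} [Fintype V] (G : SimpleGraph V) : ℕ :=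
  sInf {k | ∃ c : V → ℕ, IsSigmaColoring G c ∧ (Finset.univ.image c).card = k}

/-!
Given a proper colouring `C : V → Fin n`, label each vertex `v` by `B ^ C v` with `B = |V| + 1`.
The neighbourhood sum of `u` is then the base-`B` number whose `i`-th digit counts the neighbours
of `u` coloured `i`. All these digits are below `B`, so for adjacent `u` and `v` the two sums differ
in digit `C u`, which is `0` for `u` (the colouring is proper) and positive for `v`.
-/

theorem Nat.eq_of_sum_mul_pow_eq {b n : ℕ} (hb : 1 < b) {x y : Fin n → ℕ}
    (hx : ∀ i, x i < b) (hy : ∀ i, y i < b)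
    (h : ∑ i, x i * b ^ (i : ℕ) = ∑ i, y i * b ^ (i : ℕ)) : x = y := by
  refine List.ofFn_injective (Nat.ofDigits_inj_of_len_eq hb (by simp) (by simpa) (by simpa) ?_)
  simpa only [Nat.ofDigits_eq_sum_mapIdx, List.mapIdx_eq_ofFn, List.get_ofFn, List.length_ofFn,
    Fin.val_cast, Fin.cast_cast, Fin.cast_eq_self, List.sum_ofFn] using h

namespace SimpleGraph

variable {V α : Type*} [Fintype V] {G : SimpleGraph V}

noncomputable def Coloring.neighborColorCount (C : G.Coloring α) (u : V) (i : α) : ℕ :=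
  #{w ∈ G.neighborFinset u | C w = i}

namespace Coloring

variable (C : G.Coloring α)

theorem neighborColorCount_lt (u : V) (i : α) :
    C.neighborColorCount u i < Fintype.card V + 1 :=
  Nat.lt_succ_of_le (card_le_univ _)

theorem neighborColorCount_self (u : V) : C.neighborColorCount u (C u) = 0 :=
  card_eq_zero.2 <| filter_eq_empty_iff.2 fun w hw hcw =>
    C.valid ((G.mem_neighborFinset u w).1 hw) hcw.symm

theorem neighborColorCount_pos_of_adj {u v : V} (huv : G.Adj u v) :
    0 < C.neighborColorCount v (C u) :=
  card_pos.2 ⟨u, mem_filter.2 ⟨(G.mem_neighborFinset v u).2 huv.symm, rfl⟩⟩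

theorem sum_neighborFinset_comp {M : Type*} [AddCommMonoid M] [Fintype α] (u : V) (f : α → M) :
    ∑ w ∈ G.neighborFinset u, f (C w) = ∑ i, C.neighborColorCount u i • f i := by
  rw [← sum_fiberwise (G.neighborFinset u) C]
  refine sum_congr rfl fun i _ => ?_
  rw [sum_congr rfl fun w hw => congrArg f (mem_filter.1 hw).2, sum_const]
  rfl

end Coloring

theorem isSigmaColoring_pow_coloring {n : ℕ} (C : G.Coloring (Fin n)) :
    IsSigmaColoring G fun v => (Fintype.card V + 1) ^ (C v : ℕ) := by
  refine ⟨fun v => Nat.pow_pos (Nat.succ_pos _), fun u v huv heq => ?_⟩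
  rw [C.sum_neighborFinset_comp u (fun i => _ ^ (i : ℕ)),
    C.sum_neighborFinset_comp v (fun i => _ ^ (i : ℕ))] at heq
  simp only [smul_eq_mul] at heq
  have hB : 1 < Fintype.card V + 1 := Nat.succ_lt_succ (Fintype.card_pos_iff.2 ⟨u⟩)
  have hdigit := congrFun (Nat.eq_of_sum_mul_pow_eq hB
    (C.neighborColorCount_lt u) (C.neighborColorCount_lt v) heq) (C u)
  exact (C.neighborColorCount_pos_of_adj huv).ne' (hdigit ▸ C.neighborColorCount_self u)

theorem sigmaChrom_le_of_coloring {n : ℕ} (C : G.Coloring (Fin n)) : sigmaChrom G ≤ n :=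
  calc sigmaChrom G ≤ #(univ.image fun v => (Fintype.card V + 1) ^ (C v : ℕ)) :=
        Nat.sInf_le ⟨_, isSigmaColoring_pow_coloring C, rfl⟩
    _ ≤ #(univ.image C) := by
        simpa only [image_image, Function.comp_def] using card_image_le (s := univ.image C)
          (f := fun i : Fin n => (Fintype.card V + 1) ^ (i : ℕ))
    _ ≤ n := (card_le_univ _).trans_eq (Fintype.card_fin n)

end SimpleGraph

/-- For every graph `G`, `σ(G) ≤ χ(G)`. -/
theorem sigmaChrom_le_chromaticNumber {V : Type*} [Fintype V] (G : SimpleGraph V) :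
    (sigmaChrom G : ℕ∞) ≤ G.chromaticNumber :=
  SimpleGraph.le_chromaticNumber_iff_coloring.2 fun _ C => by
    exact_mod_cast SimpleGraph.sigmaChrom_le_of_coloring C
end

section
/- For every d-regular graph G, the sigma chromatic number equals 2 if and only if the lucky number equals 2. -/
open Finset
open scoped Classical

/-- A lucky labeling: adjacent vertices have different neighborhood sums. -/
def IsLuckyLabeling {V : Type*} [Fintype V] (G : SimpleGraph V) (ℓ : V → ℕ) : Prop :=
  ∀ u v, G.Adj u v →
    ∑ w ∈ G.neighborFinset u, ℓ w ≠ ∑ w ∈ G.neighborFinset v, ℓ w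

/-- The lucky number: minimum `k` such that there is a lucky labeling with labels in `{1,…,k}`. -/
noncomputable def luckyNum {V : Type*} [Fintype V] (G : SimpleGraph V) : ℕ :=
  sInf {k | ∃ ℓ : V → ℕ, (∀ v, ℓ v ∈ Finset.Icc 1 k) ∧ IsLuckyLabeling G ℓ}

/-!
In a `d`-regular graph the neighbourhood sum at `x` of a labeling with two values `a ≠ b` is
`b * d + (a - b) * k x`, where `k x` counts the neighbours of `x` labelled `a`. Hence whether such a
labeling is lucky depends only on which vertices receive which value, so a two-valued sigma coloring
can be relabelled by `1, 2`, and conversely. Regularity also makes a constant labeling fail as soon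
as there is an edge, so then both invariants are at least `2`; without edges both are at most `1`.
-/

theorem Nat.sInf_eq_iff_mem_of_mem_lowerBounds {s : Set ℕ} {n : ℕ} (hn : n ≠ 0)
    (h : n ∈ lowerBounds s) : sInf s = n ↔ n ∈ s := by
  refine ⟨fun hs => ?_, fun hmem => IsLeast.csInf_eq ⟨hmem, h⟩⟩
  have hne : s.Nonempty := Nat.nonempty_of_pos_sInf (by omega)
  exact hs ▸ Nat.sInf_mem hne

theorem card_image_le_of_forall_mem_Icc {V : Type*} [Fintype V] {ℓ : V → ℕ} {k : ℕ}
    (h : ∀ v, ℓ v ∈ Icc 1 k) : #(univ.image ℓ) ≤ k := by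
  calc #(univ.image ℓ) ≤ #(Icc 1 k) := card_le_card (image_subset_iff.2 fun v _ => h v)
    _ = k := by simp

section

variable {V : Type*} [Fintype V] {G : SimpleGraph V} {d : ℕ}

theorem SimpleGraph.IsRegularOfDegree.sum_neighborFinset_ite (hreg : G.IsRegularOfDegree d)
    (p : V → Prop) [DecidablePred p] (a b : ℕ) (x : V) :
    ((∑ w ∈ G.neighborFinset x, if p w then a else b : ℕ) : ℤ) =
      b * d + (a - b) * #{w ∈ G.neighborFinset x | p w} := by
  have hsplit := card_filter_add_card_filter_not (s := G.neighborFinset x) p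
  rw [G.card_neighborFinset_eq_degree, hreg x] at hsplit
  rw [sum_ite, sum_const, sum_const, smul_eq_mul, smul_eq_mul, ← hsplit]
  push_cast
  ring

theorem SimpleGraph.IsRegularOfDegree.isLuckyLabeling_ite_iff (hreg : G.IsRegularOfDegree d)
    (p : V → Prop) [DecidablePred p] {a b : ℕ} (hab : a ≠ b) :
    IsLuckyLabeling G (fun w => if p w then a else b) ↔
      ∀ u v, G.Adj u v →
        #{w ∈ G.neighborFinset u | p w} ≠ #{w ∈ G.neighborFinset v | p w} := by
  have hab' : (a - b : ℤ) ≠ 0 := sub_ne_zero.2 (by exact_mod_cast hab)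
  refine forall₂_congr fun u v => imp_congr_right fun _ => not_congr ?_
  rw [← Int.natCast_inj, hreg.sum_neighborFinset_ite, hreg.sum_neighborFinset_ite,
    add_right_inj, mul_right_inj' hab', Nat.cast_inj]

theorem IsLuckyLabeling.one_lt_card_image {c : V → ℕ} (hreg : G.IsRegularOfDegree d)
    (hc : IsLuckyLabeling G c) {u v : V} (huv : G.Adj u v) : 1 < #(univ.image c) := by
  by_contra! h
  have hconst : ∀ w, c w = c u := fun w =>
    card_le_one.1 h _ (mem_image_of_mem c (mem_univ w)) _ (mem_image_of_mem c (mem_univ u))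
  apply hc u v huv
  simp only [hconst, sum_const, G.card_neighborFinset_eq_degree, hreg u, hreg v]

theorem IsLuckyLabeling.exists_mem_Icc_one_two {c : V → ℕ} (hreg : G.IsRegularOfDegree d)
    (hc : IsLuckyLabeling G c) (hcard : #(univ.image c) = 2) :
    ∃ ℓ : V → ℕ, (∀ v, ℓ v ∈ Icc 1 2) ∧ IsLuckyLabeling G ℓ := by
  obtain ⟨a, b, hab, himg⟩ := card_eq_two.1 hcard
  have hc_ite : c = fun w => if c w = a then a else b := by
    funext w
    have hw : c w ∈ ({a, b} : Finset ℕ) := himg ▸ mem_image_of_mem c (mem_univ w)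
    rcases mem_insert.1 hw with hw | hw <;> simp_all
  refine ⟨fun w => if c w = a then 1 else 2, fun w => by by_cases h : c w = a <;> simp [h], ?_⟩
  rw [hc_ite, hreg.isLuckyLabeling_ite_iff _ hab] at hc
  exact (hreg.isLuckyLabeling_ite_iff _ (by decide)).2 hc

theorem sigmaChrom_eq_two_iff_of_adj (hreg : G.IsRegularOfDegree d) {u v : V}
    (huv : G.Adj u v) :
    sigmaChrom G = 2 ↔ ∃ c : V → ℕ, IsSigmaColoring G c ∧ #(univ.image c) = 2 :=
  Nat.sInf_eq_iff_mem_of_mem_lowerBounds two_ne_zero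
    fun _ ⟨_, hc, hk⟩ => hk ▸ IsLuckyLabeling.one_lt_card_image hreg hc.2 huv

theorem luckyNum_eq_two_iff_of_adj (hreg : G.IsRegularOfDegree d) {u v : V}
    (huv : G.Adj u v) :
    luckyNum G = 2 ↔ ∃ ℓ : V → ℕ, (∀ v, ℓ v ∈ Icc 1 2) ∧ IsLuckyLabeling G ℓ :=
  Nat.sInf_eq_iff_mem_of_mem_lowerBounds two_ne_zero
    fun _ ⟨_, hℓ, hc⟩ => (IsLuckyLabeling.one_lt_card_image hreg hc huv).trans_le
      (card_image_le_of_forall_mem_Icc hℓ)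

theorem sigmaChrom_le_one_of_forall_not_adj (h : ∀ u v, ¬G.Adj u v) : sigmaChrom G ≤ 1 := by
  have hconst : IsSigmaColoring G fun _ => 1 :=
    ⟨fun _ => one_pos, fun u v huv => absurd huv (h u v)⟩
  calc sigmaChrom G ≤ #(univ.image fun _ : V => 1) := Nat.sInf_le ⟨_, hconst, rfl⟩
    _ ≤ 1 := card_le_one.2 fun _ ha _ hb => by simp_all

theorem luckyNum_le_one_of_forall_not_adj (h : ∀ u v, ¬G.Adj u v) : luckyNum G ≤ 1 :=
  Nat.sInf_le ⟨fun _ => 1, fun _ => by simp, fun u v huv => absurd huv (h u v)⟩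

end

/-- for every `d`-regular graph `G`, `σ(G) = 2 ↔ η(G) = 2`. -/
theorem sigmaChrom_eq_two_iff_luckyNum_eq_two {V : Type*} [Fintype V]
    (G : SimpleGraph V) (d : ℕ) (hreg : G.IsRegularOfDegree d) :
    sigmaChrom G = 2 ↔ luckyNum G = 2 := by
  by_cases hE : ∃ u v, G.Adj u v
  · obtain ⟨u, v, huv⟩ := hE
    rw [sigmaChrom_eq_two_iff_of_adj hreg huv, luckyNum_eq_two_iff_of_adj hreg huv]
    constructor
    · rintro ⟨c, hc, hcard⟩
      exact IsLuckyLabeling.exists_mem_Icc_one_two hreg hc.2 hcard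
    · rintro ⟨ℓ, hℓ, hlucky⟩
      have hpos : ∀ v, 0 < ℓ v := fun v => (mem_Icc.1 (hℓ v)).1
      exact ⟨ℓ, ⟨hpos, hlucky⟩, (card_image_le_of_forall_mem_Icc hℓ).antisymm
        (IsLuckyLabeling.one_lt_card_image hreg hlucky huv)⟩
  · push Not at hE
    have hσ := sigmaChrom_le_one_of_forall_not_adj hE
    have hη := luckyNum_le_one_of_forall_not_adj hE
    omega
end

section
/- Every odd cycle C_{2m+1} (m ≥ 1) has lucky number at least 3; equivalently, there is no labeling of the vertices of an odd cycle with labels from {1,2} such that every two adjacent vertices have different sums of labels over their neighborhoods. -/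
open Finset
open scoped Classical

/-- The cycle graph on `ZMod n`: `i` is adjacent to `i ± 1`. -/
def cycleG (n : ℕ) : SimpleGraph (ZMod n) :=
  SimpleGraph.fromRel (fun i j => j = i + 1)

/-
Put `z i = 1` in `ZMod 2` when `ℓ i = ℓ (i + 1)` and `z i = 0` otherwise. For labels in `{1, 2}`,
a lucky labeling forces every `i` with `z i = 1` to have exactly one of `z (i - 1)`, `z (i + 1)`
equal to `1`, so the edges of the cycle with equal end labels come in disjoint adjacent pairs:
`∑ z = ∑ z i (z (i - 1) + z (i + 1)) = 2 ∑ z i z (i + 1)` is even. The edges with different end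
labels are even in number as well, since the label must return to its start around the cycle.
So the cycle has even length. Lucky labelings exist at all (so `luckyNum` is not the junk value
`sInf ∅ = 0`) because labels `2 ^ e v`, for an injection `e : V → ℕ`, make a neighbourhood sum
determine the neighbourhood, and adjacent vertices have different neighbourhoods.
-/

section LuckyNum

variable {V : Type*} [Fintype V] (G : SimpleGraph V)

theorem exists_isLuckyLabeling :
    ∃ ℓ : V → ℕ, (∀ v, ℓ v ∈ Icc 1 (2 ^ Fintype.card V)) ∧ IsLuckyLabeling G ℓ := by
  let e : V ↪ ℕ := (Fintype.equivFin V).toEmbedding.trans Fin.valEmbedding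
  refine ⟨fun v => 2 ^ e v, fun v => mem_Icc.2 ⟨Nat.one_le_two_pow, ?_⟩, fun u v huv hsum => ?_⟩
  · exact Nat.pow_le_pow_right two_pos (Fintype.equivFin V v).is_lt.le
  · have hnbr : G.neighborFinset u = G.neighborFinset v := by
      apply map_injective e
      apply geomSum_injective le_rfl
      simpa only [sum_map] using hsum
    have hv : v ∈ G.neighborFinset v := hnbr ▸ (G.mem_neighborFinset u v).2 huv
    exact G.irrefl ((G.mem_neighborFinset v v).1 hv)

theorem le_luckyNum {k : ℕ}
    (h : ∀ j < k, ∀ ℓ : V → ℕ, (∀ v, ℓ v ∈ Icc 1 j) → ¬IsLuckyLabeling G ℓ) :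
    k ≤ luckyNum G := by
  refine le_csInf ⟨_, exists_isLuckyLabeling G⟩ fun j ⟨ℓ, hℓ, hlucky⟩ => ?_
  by_contra! hj
  exact h j hj ℓ hℓ hlucky

end LuckyNum

section CycleG

variable {n : ℕ}

theorem cycleG_adj_add_one (hn : 1 < n) (i : ZMod n) : (cycleG n).Adj i (i + 1) := by
  have : Fact (1 < n) := ⟨hn⟩
  exact ⟨by simp, Or.inl rfl⟩

theorem cycleG_neighborFinset [NeZero n] (hn : 1 < n) (i : ZMod n) :
    (cycleG n).neighborFinset i = {i - 1, i + 1} := by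
  have : Fact (1 < n) := ⟨hn⟩
  ext v
  rw [SimpleGraph.mem_neighborFinset]
  simp only [cycleG, SimpleGraph.fromRel_adj, mem_insert, mem_singleton]
  constructor
  · rintro ⟨-, h | rfl⟩
    · exact Or.inr h
    · exact Or.inl (add_sub_cancel_right v 1).symm
  · rintro (rfl | rfl)
    · exact ⟨by simp [eq_sub_iff_add_eq], Or.inr (sub_add_cancel i 1).symm⟩
    · exact ⟨by simp, Or.inl rfl⟩

theorem sum_neighborFinset_cycleG [NeZero n] (hn : 2 < n) (ℓ : ZMod n → ℕ) (i : ZMod n) :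
    ∑ w ∈ (cycleG n).neighborFinset i, ℓ w = ℓ (i - 1) + ℓ (i + 1) := by
  have h2 : (2 : ZMod n) ≠ 0 := by
    rw [← Nat.cast_ofNat, Ne, ZMod.natCast_eq_zero_iff]
    exact fun h => by have := Nat.le_of_dvd two_pos h; omega
  rw [cycleG_neighborFinset (by omega), sum_pair]
  intro h
  exact h2 (by linear_combination -h)

end CycleG

theorem sum_mul_add_shift {G R : Type*} [AddGroup G] [Fintype G] [CommSemiring R] (g : G)
    (f : G → R) : ∑ i, f i * (f (i - g) + f (i + g)) = 2 * ∑ i, f i * f (i + g) := by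
  have hshift : ∑ i, f i * f (i - g) = ∑ i, f i * f (i + g) := by
    rw [← Equiv.sum_comp (Equiv.addRight g)]
    simp only [Equiv.coe_addRight, add_sub_cancel_right, mul_comm]
  rw [Finset.mul_sum]
  simp only [mul_add, sum_add_distrib, hshift, two_mul]

theorem sum_add_shift {G R : Type*} [AddGroup G] [Fintype G] [AddCommMonoid R] (g : G)
    (f : G → R) : ∑ i, (f i + f (i + g)) = 2 • ∑ i, f i := by
  rw [sum_add_distrib, two_nsmul]
  exact congrArg _ (Equiv.sum_comp (Equiv.addRight g) f)

def parityAgree (x y : ℕ) : ZMod 2 := 1 + x + y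

theorem parityAgree_add_add (x y : ℕ) : parityAgree x y + x + y = 1 := by
  unfold parityAgree; ring_nf; reduce_mod_char

theorem parityAgree_eq_mul_of_add_ne_add {a b c d : ℕ} (ha : a = 1 ∨ a = 2)
    (hb : b = 1 ∨ b = 2) (hc : c = 1 ∨ c = 2) (hd : d = 1 ∨ d = 2) (h : a + c ≠ b + d) :
    parityAgree b c = parityAgree b c * (parityAgree a b + parityAgree c d) := by
  rcases ha with rfl | rfl <;> rcases hb with rfl | rfl <;> rcases hc with rfl | rfl <;>
    rcases hd with rfl | rfl <;> first | decide | exact absurd rfl h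

theorem exists_add_eq_add_of_odd {n : ℕ} (hn : Odd n) (ℓ : ZMod n → ℕ)
    (hℓ : ∀ v, ℓ v = 1 ∨ ℓ v = 2) :
    ∃ i : ZMod n, ℓ (i - 1) + ℓ (i + 1) = ℓ i + ℓ (i + 2) := by
  by_contra! h
  have : NeZero n := ⟨hn.pos.ne'⟩
  set z : ZMod n → ZMod 2 := fun i => parityAgree (ℓ i) (ℓ (i + 1))
  have hz : ∀ i, z i = z i * (z (i - 1) + z (i + 1)) := fun i => by
    have := parityAgree_eq_mul_of_add_ne_add (hℓ (i - 1)) (hℓ i) (hℓ (i + 1)) (hℓ (i + 2)) (h i)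
    simpa only [z, sub_add_cancel, add_assoc, one_add_one_eq_two] using this
  have hn2 : (n : ZMod 2) = 0 := calc
    (n : ZMod 2) = ∑ i : ZMod n, 1 := by simp [ZMod.card]
    _ = ∑ i, (z i + ((ℓ i : ZMod 2) + ℓ (i + 1))) := by
      refine sum_congr rfl fun i _ => ?_
      rw [← add_assoc]
      exact (parityAgree_add_add _ _).symm
    _ = ∑ i, z i * (z (i - 1) + z (i + 1)) + ∑ i, ((ℓ i : ZMod 2) + ℓ (i + 1)) := by
      rw [sum_add_distrib, ← sum_congr rfl fun i _ => hz i]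
    _ = 2 * ∑ i, z i * z (i + 1) + 2 • ∑ i, (ℓ i : ZMod 2) := by
      rw [sum_mul_add_shift, sum_add_shift 1 (fun i => (ℓ i : ZMod 2))]
    _ = 0 := by rw [two_nsmul, ← two_mul, show (2 : ZMod 2) = 0 from rfl, zero_mul, zero_mul,
      add_zero]
  exact Nat.not_even_iff_odd.2 hn (ZMod.natCast_eq_zero_iff_even.1 hn2)

/-- every odd cycle `C_{2m+1}` (`m ≥ 1`) has lucky number at least `3`;
equivalently, for every labeling with labels from `{1,2}` some two adjacent vertices
have equal neighborhood sums. -/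
theorem oddCycle_luckyNum_ge_three (m : ℕ) (hm : 1 ≤ m) :
    3 ≤ luckyNum (cycleG (2 * m + 1)) ∧
      ∀ ℓ : ZMod (2 * m + 1) → ℕ, (∀ v, ℓ v = 1 ∨ ℓ v = 2) →
        ∃ i : ZMod (2 * m + 1), ℓ (i - 1) + ℓ (i + 1) = ℓ i + ℓ (i + 2) := by
  have hn : 2 < 2 * m + 1 := by omega
  have hconflict := exists_add_eq_add_of_odd (odd_two_mul_add_one m)
  refine ⟨le_luckyNum _ fun j hj ℓ hℓ hlucky => ?_, hconflict⟩
  obtain ⟨i, hi⟩ := hconflict ℓ fun v => by have := mem_Icc.1 (hℓ v); omega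
  apply hlucky i (i + 1) (cycleG_adj_add_one (by omega) i)
  rw [sum_neighborFinset_cycleG hn, sum_neighborFinset_cycleG hn, add_sub_cancel_right,
    add_assoc, one_add_one_eq_two]
  exact hi
end

section
/- Let G be a graph with maximum degree Δ, and let c be a sigma coloring of G using k distinct labels. If s ≥ Δ + 1, then the labeling obtained by replacing the k labels (in order) by 1, s, s², ..., s^{k-1} is also a sigma coloring of G. -/
open Finset
open scoped Classical

/-!
With `s > Δ`, every label occurs fewer than `s` times in a neighborhood, so the sum of `s ^ (label)`
over the neighborhood is a base-`s` expansion whose digits are the label multiplicities. Equal sums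
therefore mean equal multisets of labels, and then the neighborhood sums of the original coloring
agree as well.
-/

theorem Nat.eq_of_sum_mul_pow_eq_s6 {s : ℕ} :
    ∀ {k : ℕ} {f g : Fin k → ℕ}, (∀ i, f i < s) → (∀ i, g i < s) →
      ∑ i, f i * s ^ (i : ℕ) = ∑ i, g i * s ^ (i : ℕ) → f = g
  | 0, _, _, _, _, _ => Subsingleton.elim _ _
  | k + 1, f, g, hf, hg, h => by
    have hs : 0 < s := Nat.zero_lt_of_lt (hf 0)
    have hshift : ∀ d : Fin (k + 1) → ℕ,
        ∑ i, d i * s ^ (i : ℕ) = d 0 + (∑ i : Fin k, d i.succ * s ^ (i : ℕ)) * s := by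
      intro d
      rw [Fin.sum_univ_succ, sum_mul]
      simp only [Fin.val_zero, pow_zero, mul_one, Fin.val_succ, pow_succ, mul_assoc]
    rw [hshift f, hshift g] at h
    have head : f 0 = g 0 := by
      simpa [Nat.add_mul_mod_self_right, Nat.mod_eq_of_lt (hf 0), Nat.mod_eq_of_lt (hg 0)]
        using congrArg (· % s) h
    rw [head, Nat.add_left_cancel_iff] at h
    have tail : (fun i : Fin k => f i.succ) = fun i => g i.succ :=
      Nat.eq_of_sum_mul_pow_eq_s6 (fun i => hf i.succ) (fun i => hg i.succ)
        (Nat.eq_of_mul_eq_mul_right hs h)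
    exact funext fun i => Fin.cases head (congrFun tail) i

theorem Multiset.sum_map_pow_eq_sum_count_mul {k : ℕ} (s : ℕ) (X : Multiset (Fin k)) :
    (X.map fun i : Fin k => s ^ (i : ℕ)).sum = ∑ i, X.count i * s ^ (i : ℕ) := by
  simp only [Finset.sum_multiset_map_count, smul_eq_mul]
  refine Finset.sum_subset (subset_univ _) fun i _ hi => ?_
  rw [Multiset.count_eq_zero.mpr (by simpa using hi), zero_mul]

theorem Multiset.eq_of_sum_map_pow_eq {s k : ℕ} {X Y : Multiset (Fin k)}
    (hX : X.card < s) (hY : Y.card < s)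
    (h : (X.map fun i : Fin k => s ^ (i : ℕ)).sum = (Y.map fun i : Fin k => s ^ (i : ℕ)).sum) :
    X = Y := by
  rw [Multiset.sum_map_pow_eq_sum_count_mul, Multiset.sum_map_pow_eq_sum_count_mul] at h
  have hcount := Nat.eq_of_sum_mul_pow_eq_s6 (fun i => (X.count_le_card i).trans_lt hX)
    (fun i => (Y.count_le_card i).trans_lt hY) h
  exact Multiset.ext.mpr (congrFun hcount)

theorem sigmaColoring_powers_general {V : Type*} [Fintype V] (G : SimpleGraph V)
    (s k : ℕ) (hs : G.maxDegree + 1 ≤ s)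
    (a : Fin k → ℕ) (t : V → Fin k)
    (hc : IsSigmaColoring G (fun v => a (t v))) :
    IsSigmaColoring G (fun v => s ^ (t v : ℕ)) := by
  refine ⟨fun v => pow_pos (by omega) _, fun u v huv hpow => hc.2 u v huv ?_⟩
  have card_lt : ∀ x, ((G.neighborFinset x).val.map t).card < s := fun x => by
    simpa using (G.degree_le_maxDegree x).trans_lt hs
  have hlabels : (G.neighborFinset u).val.map t = (G.neighborFinset v).val.map t :=
    Multiset.eq_of_sum_map_pow_eq (card_lt u) (card_lt v)
      (by simpa only [Finset.sum_eq_multiset_sum, Multiset.map_map, Function.comp_def] using hpow)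
  simpa only [Finset.sum_eq_multiset_sum, Multiset.map_map, Function.comp_def]
    using congrArg (fun X => (X.map a).sum) hlabels

/-- if `c = a ∘ t` is a sigma coloring of `G` using the `k` labels
`a 0 < a 1 < ⋯ < a (k-1)`, and `s ≥ Δ(G) + 1`, then replacing the labels in order by
`1 = s⁰, s, s², …, s^(k-1)` again yields a sigma coloring. -/
theorem sigmaColoring_powers {V : Type*} [Fintype V] (G : SimpleGraph V)
    (s k : ℕ) (hs : G.maxDegree + 1 ≤ s)
    (a : Fin k → ℕ) (ha : StrictMono a) (t : V → Fin k)
    (hc : IsSigmaColoring G (fun v => a (t v))) :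
    IsSigmaColoring G (fun v => s ^ (t v : ℕ)) :=
  sigmaColoring_powers_general G s k hs a t hc
end

section
/- Let G be the graph obtained from the complete graph on (k+2 choose 2) vertices by attaching k pendant leaves to each vertex of the complete graph. Then the lucky number of G is at least k/2. -/
open Finset
open scoped Classical

/-- The complete graph on `Fin N` with `k` pendant leaves attached to each vertex:
`inl a` are the clique vertices, `inr (a, j)` is the `j`-th leaf attached to `a`. -/
def leafy (k N : ℕ) : SimpleGraph (Fin N ⊕ Fin N × Fin k) :=
  SimpleGraph.fromRel (fun x y =>
    match x, y with
    | Sum.inl _, Sum.inl _ => True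
    | Sum.inl a, Sum.inr (b, _) => a = b
    | _, _ => False)

/-!
The neighbourhood sum of a clique vertex `a` is `S + (ℓ(leaves of a) - ℓ a)`, where `S` is the
total label of the clique. Clique vertices are pairwise adjacent, so this leaf excess is injective
in `a`; with labels in `{1, …, m}` it lies in `[k - m, km - 1]`, an interval of `(k + 1)m - k`
integers. Hence `(k + 2).choose 2 + k ≤ (k + 1)m`, i.e. `k ≤ 2m`. Since `luckyNum` is an `sInf`,
which is `0` on the empty set, one also needs some lucky labeling: give clique vertices label `1`
and the leaves of `a` label `a + 1`.
-/

namespace leafy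
variable {k N : ℕ}

@[simp] lemma adj_inl_inl {a b : Fin N} : (leafy k N).Adj (.inl a) (.inl b) ↔ a ≠ b := by
  simp [leafy]

@[simp] lemma adj_inl_inr {a b : Fin N} {j : Fin k} :
    (leafy k N).Adj (.inl a) (.inr (b, j)) ↔ a = b := by
  simp [leafy]

@[simp] lemma adj_inr_inl {a b : Fin N} {j : Fin k} :
    (leafy k N).Adj (.inr (b, j)) (.inl a) ↔ a = b := by
  simp [leafy]

@[simp] lemma not_adj_inr_inr {a b : Fin N × Fin k} : ¬ (leafy k N).Adj (.inr a) (.inr b) := by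
  simp [leafy]

def leafExcess (ℓ : Fin N ⊕ Fin N × Fin k → ℕ) (a : Fin N) : ℤ :=
  ∑ j, (ℓ (.inr (a, j)) : ℤ) - ℓ (.inl a)

lemma sum_neighborFinset_inl (ℓ : Fin N ⊕ Fin N × Fin k → ℕ) (a : Fin N) :
    ((∑ w ∈ (leafy k N).neighborFinset (.inl a), ℓ w : ℕ) : ℤ) =
      ∑ b, (ℓ (.inl b) : ℤ) + leafExcess ℓ a := by
  have h : ∑ w ∈ (leafy k N).neighborFinset (.inl a), ℓ w =
      ∑ b ∈ univ.erase a, ℓ (.inl b) + ∑ j, ℓ (.inr (a, j)) := by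
    rw [SimpleGraph.neighborFinset_eq_filter, sum_filter, Fintype.sum_sum_type,
      Fintype.sum_prod_type]
    simp only [adj_inl_inl, adj_inl_inr, sum_ite_eq, sum_ite_irrel, sum_const_zero]
    rw [sum_ite, ← filter_ne]
    simp
  rw [h, leafExcess]
  push_cast
  rw [sum_erase_eq_sub (mem_univ a)]
  ring

lemma sum_neighborFinset_inr (ℓ : Fin N ⊕ Fin N × Fin k → ℕ) (a : Fin N) (j : Fin k) :
    ∑ w ∈ (leafy k N).neighborFinset (.inr (a, j)), ℓ w = ℓ (.inl a) := by
  rw [SimpleGraph.neighborFinset_eq_filter, sum_filter, Fintype.sum_sum_type]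
  simp

lemma leafExcess_injective {ℓ : Fin N ⊕ Fin N × Fin k → ℕ} (hℓ : IsLuckyLabeling (leafy k N) ℓ) :
    Function.Injective (leafExcess ℓ) := by
  intro a b hab
  by_contra hne
  apply hℓ _ _ (adj_inl_inl.2 hne)
  exact_mod_cast (sum_neighborFinset_inl ℓ a).trans (hab ▸ (sum_neighborFinset_inl ℓ b).symm)

lemma leafExcess_mem_Icc {ℓ : Fin N ⊕ Fin N × Fin k → ℕ} {m : ℕ} (hℓ : ∀ v, ℓ v ∈ Icc 1 m)
    (a : Fin N) : leafExcess ℓ a ∈ Icc ((k : ℤ) - m) (k * m - 1) := by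
  have hlabel : ∀ v, 1 ≤ (ℓ v : ℤ) ∧ (ℓ v : ℤ) ≤ m := fun v => by
    have := mem_Icc.1 (hℓ v); omega
  have hleaves : (k : ℤ) ≤ ∑ j, (ℓ (.inr (a, j)) : ℤ) ∧ ∑ j, (ℓ (.inr (a, j)) : ℤ) ≤ k * m := by
    constructor
    · simpa using card_nsmul_le_sum univ (fun j => (ℓ (.inr (a, j)) : ℤ)) 1
        fun j _ => (hlabel _).1
    · simpa using sum_le_card_nsmul univ (fun j => (ℓ (.inr (a, j)) : ℤ)) m
        fun j _ => (hlabel _).2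
  rw [mem_Icc, leafExcess]
  constructor <;> linarith [hlabel (.inl a)]

lemma card_add_le {ℓ : Fin N ⊕ Fin N × Fin k → ℕ} {m : ℕ} (hN : 0 < N)
    (hℓ : ∀ v, ℓ v ∈ Icc 1 m) (hlucky : IsLuckyLabeling (leafy k N) ℓ) :
    N + k ≤ (k + 1) * m := by
  obtain ⟨h1, hm⟩ := mem_Icc.1 (hℓ (.inl ⟨0, hN⟩))
  have hcard := card_le_card_of_injOn (s := univ) (leafExcess ℓ)
    (fun a _ => leafExcess_mem_Icc hℓ a) (leafExcess_injective hlucky).injOn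
  rw [card_univ, Fintype.card_fin, Int.card_Icc] at hcard
  have : (0 : ℤ) ≤ k * m - k := by nlinarith [h1.trans hm]
  zify at hcard ⊢
  rw [Int.toNat_of_nonneg (by linarith)] at hcard
  linarith

def indexLabel : Fin N ⊕ Fin N × Fin k → ℕ := Sum.elim 1 fun p => p.1 + 1

lemma indexLabel_mem_Icc (v : Fin N ⊕ Fin N × Fin k) : indexLabel v ∈ Icc 1 N := by
  rcases v with a | ⟨a, j⟩ <;> simp [indexLabel, Nat.one_le_iff_ne_zero, a.pos.ne']

lemma sum_neighborFinset_inl_indexLabel (a : Fin N) :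
    ((∑ w ∈ (leafy k N).neighborFinset (.inl a), indexLabel w : ℕ) : ℤ) =
      N + k * (a + 1) - 1 := by
  rw [sum_neighborFinset_inl, leafExcess]
  simp [indexLabel]
  ring

lemma isLuckyLabeling_indexLabel (hk : 0 < k) (hN : 2 ≤ N) :
    IsLuckyLabeling (leafy k N) indexLabel := by
  rintro (a | ⟨a, i⟩) (b | ⟨b, j⟩) hadj hsum <;>
    simp only [adj_inl_inl, adj_inl_inr, adj_inr_inl, not_adj_inr_inr] at hadj <;>
    replace hsum := congrArg (Nat.cast : ℕ → ℤ) hsum <;>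
    simp only [sum_neighborFinset_inl_indexLabel, sum_neighborFinset_inr] at hsum
  · exact hadj (Fin.ext (by exact_mod_cast (by nlinarith : (a : ℤ) = b)))
  all_goals simp [indexLabel] at hsum; nlinarith

end leafy

lemma exists_isLuckyLabeling_luckyNum {V : Type*} [Fintype V] {G : SimpleGraph V} {m : ℕ}
    {ℓ : V → ℕ} (hℓ : ∀ v, ℓ v ∈ Icc 1 m) (hlucky : IsLuckyLabeling G ℓ) :
    ∃ ℓ' : V → ℕ, (∀ v, ℓ' v ∈ Icc 1 (luckyNum G)) ∧ IsLuckyLabeling G ℓ' :=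
  Nat.sInf_mem (s := {m | ∃ ℓ : V → ℕ, (∀ v, ℓ v ∈ Icc 1 m) ∧ IsLuckyLabeling G ℓ})
    ⟨m, ℓ, hℓ, hlucky⟩

/-- the complete graph on `(k+2).choose 2` vertices with `k` pendant leaves
attached to each vertex has lucky number at least `k / 2`. -/
theorem leafy_luckyNum_ge (k : ℕ) :
    (k : ℝ) / 2 ≤ (luckyNum (leafy k ((k + 2).choose 2)) : ℝ) := by
  have hN : (k + 2).choose 2 * 2 = (k + 2) * (k + 1) := by
    simpa using (Nat.add_one_mul_choose_eq (k + 1) 1).symm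
  rcases Nat.eq_zero_or_pos k with rfl | hk
  · simp
  obtain ⟨ℓ, hℓ, hlucky⟩ := exists_isLuckyLabeling_luckyNum
    (leafy.indexLabel_mem_Icc (N := (k + 2).choose 2))
    (leafy.isLuckyLabeling_indexLabel hk (by nlinarith))
  have hcard := leafy.card_add_le (by nlinarith) hℓ hlucky
  rw [div_le_iff₀ two_pos]
  exact_mod_cast (by nlinarith : k ≤ luckyNum (leafy k ((k + 2).choose 2)) * 2)
end

section
/- In any sigma coloring of the triangle K₃ whose three vertices each additionally receive contributions from one external neighbor, if all three external neighbors have equal labels then no valid 2-label sigma coloring of the triangle vertices exists; hence in the reduction graph, for each clause gadget (a triangle attached to three literal vertices), the three attached literal vertices cannot all have the same label. -/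
open Finset
open scoped Classical

/-! The neighborhood sum at a triangle vertex `cᵢ` is `T - ℓ cᵢ + ℓ yᵢ`, with `T` the total label
of the triangle (the three listed neighbours of `cᵢ` are distinct because `cᵢ` has degree 3).
If the `ℓ yᵢ` agree, the lucky condition on the edges of the triangle forces the three labels
`ℓ cᵢ` to be pairwise distinct, which two labels cannot achieve. -/

theorem Finset.pairwise_ne_of_card_triple_eq_three {α : Type*} [DecidableEq α] {a b c : α}
    (h : #({a, b, c} : Finset α) = 3) : a ≠ b ∧ a ≠ c ∧ b ≠ c := by
  refine ⟨?_, ?_, ?_⟩ <;> rintro rfl <;>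
    simp only [mem_insert, mem_singleton, true_or, or_true, insert_eq_of_mem] at h <;>
    exact (card_le_two.trans_lt (by norm_num)).ne h

namespace SimpleGraph

variable {V : Type*} [Fintype V] {G : SimpleGraph V}

theorem sum_neighborFinset_eq_of_degree_eq_three {M : Type*} [AddCommMonoid M] {v a b c : V}
    (hdeg : G.degree v = 3) (hN : G.neighborFinset v = {a, b, c}) (f : V → M) :
    ∑ w ∈ G.neighborFinset v, f w = f a + f b + f c := by
  have hcard : #({a, b, c} : Finset V) = 3 := by rw [← hN, card_neighborFinset_eq_degree, hdeg]
  obtain ⟨hab, hac, hbc⟩ := Finset.pairwise_ne_of_card_triple_eq_three hcard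
  rw [hN, sum_insert (by simp [hab, hac]), sum_pair hbc, add_assoc]

end SimpleGraph

open SimpleGraph

theorem IsLuckyLabeling.ne_of_triangle {V : Type*} [Fintype V] {G : SimpleGraph V}
    {ℓ : V → ℕ} (hl : IsLuckyLabeling G ℓ) {a b c y z : V}
    (hda : G.degree a = 3) (hdb : G.degree b = 3)
    (ha : G.neighborFinset a = {b, c, y}) (hb : G.neighborFinset b = {a, c, z})
    (hyz : ℓ y = ℓ z) : ℓ a ≠ ℓ b := by
  have hadj : G.Adj a b := by simp [← mem_neighborFinset, ha]
  have hsum := hl a b hadj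
  rw [sum_neighborFinset_eq_of_degree_eq_three hda ha,
    sum_neighborFinset_eq_of_degree_eq_three hdb hb, hyz] at hsum
  omega

theorem clause_gadget_not_all_equal_general {V : Type*} [Fintype V] (G : SimpleGraph V)
    (hreg : G.IsRegularOfDegree 3)
    (c₁ c₂ c₃ y₁ y₂ y₃ : V)
    (hn₁ : G.neighborFinset c₁ = {c₂, c₃, y₁})
    (hn₂ : G.neighborFinset c₂ = {c₁, c₃, y₂})
    (hn₃ : G.neighborFinset c₃ = {c₁, c₂, y₃})
    (ℓ : V → ℕ) (hval : ∀ v, ℓ v = 1 ∨ ℓ v = 2) (hl : IsLuckyLabeling G ℓ) :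
    ¬ (ℓ y₁ = ℓ y₂ ∧ ℓ y₂ = ℓ y₃) := by
  rintro ⟨h12, h23⟩
  have hne₁₂ : ℓ c₁ ≠ ℓ c₂ := hl.ne_of_triangle (hreg c₁) (hreg c₂) hn₁ hn₂ h12
  have hne₁₃ : ℓ c₁ ≠ ℓ c₃ := hl.ne_of_triangle (hreg c₁) (hreg c₃)
    (by rw [hn₁, insert_comm]) hn₃ (h12.trans h23)
  have hne₂₃ : ℓ c₂ ≠ ℓ c₃ := hl.ne_of_triangle (hreg c₂) (hreg c₃)
    (by rw [hn₂, insert_comm]) (by rw [hn₃, insert_comm]) h23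
  rcases hval c₁ with h₁ | h₁ <;> rcases hval c₂ with h₂ | h₂ <;> rcases hval c₃ with h₃ | h₃ <;>
    omega

/-- in a 3-regular graph containing a triangle `c₁c₂c₃` where each `cᵢ` has
exactly one neighbor `yᵢ` outside the triangle, for any lucky labeling with labels `{1,2}`
the three external neighbors `y₁, y₂, y₃` cannot all have the same label. -/
theorem clause_gadget_not_all_equal {V : Type*} [Fintype V] (G : SimpleGraph V)
    (hreg : G.IsRegularOfDegree 3)
    (c₁ c₂ c₃ y₁ y₂ y₃ : V)
    (hc : c₁ ≠ c₂ ∧ c₁ ≠ c₃ ∧ c₂ ≠ c₃)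
    (hy : y₁ ∉ ({c₁, c₂, c₃} : Set V) ∧ y₂ ∉ ({c₁, c₂, c₃} : Set V) ∧
      y₃ ∉ ({c₁, c₂, c₃} : Set V))
    (hn₁ : G.neighborFinset c₁ = {c₂, c₃, y₁})
    (hn₂ : G.neighborFinset c₂ = {c₁, c₃, y₂})
    (hn₃ : G.neighborFinset c₃ = {c₁, c₂, y₃})
    (ℓ : V → ℕ) (hval : ∀ v, ℓ v = 1 ∨ ℓ v = 2) (hl : IsLuckyLabeling G ℓ) :
    ¬ (ℓ y₁ = ℓ y₂ ∧ ℓ y₂ = ℓ y₃) :=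
  clause_gadget_not_all_equal_general G hreg c₁ c₂ c₃ y₁ y₂ y₃ hn₁ hn₂ hn₃ ℓ hval hl
end

section
/- Let G be a graph and c a sigma coloring of G with exactly σ(G) distinct labels. If K is a set of pairwise adjacent vertices of G all having equal closed neighborhoods (i.e., N[u] = N[v] for all u, v ∈ K), then all vertices of K receive pairwise distinct labels; consequently σ(G) ≥ |K|. -/
open Finset
open scoped Classical

section

variable {V : Type*} [Fintype V] {G : SimpleGraph V}

theorem SimpleGraph.add_sum_neighborFinset_eq_of_closedNbhd_eq {M : Type*} [AddCommMonoid M]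
    (f : V → M) {u v : V} (h : insert u (G.neighborFinset u) = insert v (G.neighborFinset v)) :
    f u + ∑ w ∈ G.neighborFinset u, f w = f v + ∑ w ∈ G.neighborFinset v, f w := by
  rw [← sum_insert (by simp), ← sum_insert (by simp), h]

theorem IsSigmaColoring.ne_of_adj_of_closedNbhd_eq {c : V → ℕ} (hc : IsSigmaColoring G c)
    {u v : V} (huv : G.Adj u v)
    (h : insert u (G.neighborFinset u) = insert v (G.neighborFinset v)) : c u ≠ c v := by
  intro hcuv
  have hsum := G.add_sum_neighborFinset_eq_of_closedNbhd_eq c h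
  exact hc.2 u v huv (by omega)

theorem IsSigmaColoring.injOn_of_closedNbhd_eq {c : V → ℕ} (hc : IsSigmaColoring G c)
    {K : Finset V} (hadj : ∀ u ∈ K, ∀ v ∈ K, u ≠ v → G.Adj u v)
    (hN : ∀ u ∈ K, ∀ v ∈ K, insert u (G.neighborFinset u) = insert v (G.neighborFinset v)) :
    Set.InjOn c (K : Set V) := by
  intro u hu v hv hcuv
  by_contra huv
  exact hc.ne_of_adj_of_closedNbhd_eq (hadj u hu v hv huv) (hN u hu v hv) hcuv

end

/-- if `c` is a sigma coloring of `G` with exactly `σ(G)` labels and `K` is a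
set of pairwise adjacent vertices with pairwise equal closed neighborhoods, then `c` is
injective on `K`, and consequently `σ(G) ≥ |K|`. -/
theorem sigma_injOn_clique_of_closedNbhd_eq {V : Type*} [Fintype V] (G : SimpleGraph V)
    (c : V → ℕ) (hc : IsSigmaColoring G c)
    (hcard : (Finset.univ.image c).card = sigmaChrom G)
    (K : Finset V)
    (hadj : ∀ u ∈ K, ∀ v ∈ K, u ≠ v → G.Adj u v)
    (hN : ∀ u ∈ K, ∀ v ∈ K,
      insert u (G.neighborFinset u) = insert v (G.neighborFinset v)) :
    Set.InjOn c (K : Set V) ∧ K.card ≤ sigmaChrom G := by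
  have hinj := hc.injOn_of_closedNbhd_eq hadj hN
  exact ⟨hinj, hcard ▸ card_le_card_of_injOn c (fun v _ => mem_image_of_mem c (mem_univ v)) hinj⟩
end

section
/- Let G be a graph and suppose v₁, ..., v_{k-1} and a vertex family {y_{βγ}} form the gadget where each clique K_{k²−k+1} has vertices partitioned so that row β (1 ≤ β ≤ k−1) of k−1 vertices is joined to vᵦ. In any sigma coloring of the full construction graph G** with exactly k labels, the vertices v₁, ..., v_{k−1} receive pairwise distinct labels. -/
/-!
Two vertices of the clique in rows `β₁ ≠ β₂` have closed neighbourhoods `Y ∪ {v β₁}` and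
`Y ∪ {v β₂}`. If `v β₁` and `v β₂` had the same label, the closed neighbourhood sums of all
`2(k-1)` vertices of these two rows would agree; since any two of them are adjacent, the sigma
condition forces their labels to be pairwise distinct, which needs `2(k-1) > k` labels.
-/

open Finset
open scoped Classical

namespace IsSigmaColoring

variable {V : Type*} [Fintype V] {G : SimpleGraph V} {c : V → ℕ}

theorem apply_ne_of_adj_of_closed_sum_eq (hc : IsSigmaColoring G c) {u w : V} (hadj : G.Adj u w)
    (hsum : c u + ∑ x ∈ G.neighborFinset u, c x = c w + ∑ x ∈ G.neighborFinset w, c x) :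
    c u ≠ c w :=
  fun hlabel => hc.2 u w hadj (by omega)

end IsSigmaColoring

namespace CliqueGadget

variable {V ι κ : Type*} [Fintype V] {G : SimpleGraph V} {v : ι → V} {Y : Finset V}
  {y : ι × κ → V}

theorem adj_of_ne (hyY : ∀ p, y p ∈ Y)
    (hnb : ∀ β γ, G.neighborFinset (y (β, γ)) = Y.erase (y (β, γ)) ∪ {v β})
    {p q : ι × κ} (hne : y p ≠ y q) : G.Adj (y p) (y q) := by
  rw [← SimpleGraph.mem_neighborFinset, hnb p.1 p.2]
  simp [hne.symm, hyY q]

theorem closed_sum_eq (c : V → ℕ) (hyY : ∀ p, y p ∈ Y) (hvY : ∀ β, v β ∉ Y)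
    (hnb : ∀ β γ, G.neighborFinset (y (β, γ)) = Y.erase (y (β, γ)) ∪ {v β}) (p : ι × κ) :
    c (y p) + ∑ x ∈ G.neighborFinset (y p), c x = ∑ x ∈ Y, c x + c (v p.1) := by
  have hdisj : Disjoint (Y.erase (y p)) {v p.1} :=
    disjoint_singleton_right.mpr fun h => hvY p.1 (mem_of_mem_erase h)
  rw [hnb p.1 p.2, sum_union hdisj, sum_singleton, ← add_assoc, add_sum_erase _ _ (hyY p)]

theorem label_ne_of_row_labels_eq {c : V → ℕ} (hc : IsSigmaColoring G c)
    (hyinj : Function.Injective y) (hyY : ∀ p, y p ∈ Y) (hvY : ∀ β, v β ∉ Y)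
    (hnb : ∀ β γ, G.neighborFinset (y (β, γ)) = Y.erase (y (β, γ)) ∪ {v β})
    {p q : ι × κ} (hpq : p ≠ q) (hrow : c (v p.1) = c (v q.1)) : c (y p) ≠ c (y q) := by
  refine hc.apply_ne_of_adj_of_closed_sum_eq (adj_of_ne hyY hnb (hyinj.ne hpq)) ?_
  rw [closed_sum_eq c hyY hvY hnb, closed_sum_eq c hyY hvY hnb, hrow]

end CliqueGadget

theorem external_vertices_distinct_labels_general {V : Type*} [Fintype V] (G : SimpleGraph V)
    (k : ℕ) (hk : 3 ≤ k)
    (c : V → ℕ) (hc : IsSigmaColoring G c) (hcard : (Finset.univ.image c).card = k)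
    (v : Fin (k - 1) → V)
    (Y : Finset V)
    (y : Fin (k - 1) × Fin (k - 1) → V) (hyinj : Function.Injective y)
    (hyY : ∀ p, y p ∈ Y) (hvY : ∀ β, v β ∉ Y)
    (hnb : ∀ β γ : Fin (k - 1),
      G.neighborFinset (y (β, γ)) = Y.erase (y (β, γ)) ∪ {v β}) :
    Function.Injective (fun β => c (v β)) := by
  intro β₁ β₂ hlabel
  by_contra hne
  set rows : Finset (Fin (k - 1) × Fin (k - 1)) := ({β₁, β₂} : Finset _) ×ˢ univ
  have hrow : ∀ p ∈ rows, c (v p.1) = c (v β₁) := by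
    intro p hp
    rcases mem_insert.mp (mem_product.mp hp).1 with h | h
    · rw [h]
    · rw [mem_singleton.mp h]; exact hlabel.symm
  have hinj : Set.InjOn (c ∘ y) rows := fun p hp q hq hpq => by
    by_contra hne'
    exact CliqueGadget.label_ne_of_row_labels_eq hc hyinj hyY hvY hnb hne'
      ((hrow p hp).trans (hrow q hq).symm) hpq
  have hle := card_le_card_of_injOn (c ∘ y) (t := univ.image c)
    (fun p _ => mem_image_of_mem c (mem_univ _)) hinj
  rw [card_product, card_pair_eq_two_iff.mpr hne, card_univ, Fintype.card_fin, hcard] at hle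
  omega

/-- Property A of the construction `G**`: `Y` is the vertex set of one of
the cliques `K_{k²−k+1}`, `y (β, γ)` (for `1 ≤ β, γ ≤ k−1`, here `0`-indexed) is the `γ`-th
vertex of row `β` of the clique, and each vertex of row `β` is joined to the external vertex
`v β`; i.e. the neighborhood of `y (β, γ)` is exactly the rest of the clique together with
`v β`.  In any sigma coloring of the construction graph with exactly `k` labels, the
vertices `v 0, …, v (k-2)` receive pairwise distinct labels. -/
theorem external_vertices_distinct_labels {V : Type*} [Fintype V] (G : SimpleGraph V)
    (k : ℕ) (hk : 3 ≤ k)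
    (c : V → ℕ) (hc : IsSigmaColoring G c) (hcard : (Finset.univ.image c).card = k)
    (v : Fin (k - 1) → V) (hvinj : Function.Injective v)
    (Y : Finset V) (hYcard : Y.card = k ^ 2 - k + 1)
    (y : Fin (k - 1) × Fin (k - 1) → V) (hyinj : Function.Injective y)
    (hyY : ∀ p, y p ∈ Y) (hvY : ∀ β, v β ∉ Y)
    (hnb : ∀ β γ : Fin (k - 1),
      G.neighborFinset (y (β, γ)) = Y.erase (y (β, γ)) ∪ {v β}) :
    Function.Injective (fun β => c (v β)) :=
  external_vertices_distinct_labels_general G k hk c hc hcard v Y y hyinj hyY hvY hnb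
end

section
/- Let C be an odd cycle v₁v₂...v_{2m+1}. For any function ℓ : V(C) → {a, b} with a ≠ b, there exist two adjacent vertices whose neighborhood sums (sum of ℓ over their two cycle-neighbors) are equal. -/
/-!
Call the edge `{i, i + 1}` monochromatic when `ℓ i = ℓ (i + 1)`. Suppose no two adjacent vertices
have equal neighborhood sums. Then two monochromatic edges are never at distance two, and, since
`ℓ` takes only two values, every monochromatic edge has a monochromatic neighbor: otherwise
`ℓ (i - 1) = ℓ (i + 2)` and the vertices `i`, `i + 1` have the same neighborhood sums. So the
monochromatic edges come in disjoint adjacent pairs and their number is even. The number of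
bichromatic edges is even as well, since a two-valued labeling changes value an even number of times
around a cycle. Hence the cycle has even length.
-/

open Finset

namespace ZMod

variable {n : ℕ} [NeZero n]

lemma even_card_filter_ne_add_one (f : ZMod n → ZMod 2) : Even #{i | f i ≠ f (i + 1)} := by
  have hstep : ∀ i, f (i + 1) - f i = if f i ≠ f (i + 1) then 1 else 0 := by
    intro i
    split_ifs with h
    · generalize f i = x at h ⊢
      generalize f (i + 1) = y at h ⊢
      decide +revert
    · rw [not_not.mp h, sub_self]
  have htele : ∑ i, (f (i + 1) - f i) = 0 := by
    rw [sum_sub_distrib, sub_eq_zero]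
    exact Fintype.sum_equiv (Equiv.addRight 1) _ _ fun _ => rfl
  rw [← ZMod.natCast_eq_zero_iff_even, natCast_card_filter, ← Fintype.sum_congr _ _ hstep]
  exact htele

lemma even_card_filter_ne_add_one_of_two_valued {α : Type*} [DecidableEq α] (ℓ : ZMod n → α)
    (a b : α) (hval : ∀ v, ℓ v = a ∨ ℓ v = b) : Even #{i | ℓ i ≠ ℓ (i + 1)} := by
  have hind : ∀ i j,
      ℓ i = ℓ j ↔ (if ℓ i = a then (0 : ZMod 2) else 1) = if ℓ j = a then 0 else 1 := by
    intro i j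
    rcases hval i with hi | hi <;> rcases hval j with hj | hj <;> by_cases hab : a = b <;>
      grind
  simpa only [ne_eq, hind] using even_card_filter_ne_add_one fun i => if ℓ i = a then 0 else 1

lemma even_card_filter_of_adjacent_pairs (E : ZMod n → Prop) [DecidablePred E]
    (hsep : ∀ i, ¬(E i ∧ E (i + 2))) (hnbr : ∀ i, E i → E (i - 1) ∨ E (i + 1)) :
    Even #{i | E i} := by
  have hsplit : univ.filter E =
      univ.filter (fun i => E i ∧ E (i + 1)) ∪ univ.filter (fun i => E (i - 1) ∧ E i) := by
    ext i
    simp only [mem_filter, mem_univ, true_and, mem_union]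
    constructor
    · intro hi
      rcases hnbr i hi with h | h <;> tauto
    · tauto
  have hdisj : Disjoint (univ.filter fun i => E i ∧ E (i + 1))
      (univ.filter fun i => E (i - 1) ∧ E i) := by
    refine disjoint_filter.mpr fun i _ hi hi' => hsep (i - 1) ⟨hi'.1, ?_⟩
    rw [show i - 1 + 2 = i + 1 by ring]
    exact hi.2
  have hshift : #(univ.filter fun i => E i ∧ E (i + 1)) =
      #(univ.filter fun i => E (i - 1) ∧ E i) :=
    card_equiv (Equiv.addRight 1) (by simp)
  rw [hsplit, card_union_of_disjoint hdisj, hshift]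
  exact ⟨_, rfl⟩

end ZMod

theorem oddCycle_two_labels_equal_sums_general (m : ℕ) (a b : ℕ)
    (ℓ : ZMod (2 * m + 1) → ℕ) (hval : ∀ v, ℓ v = a ∨ ℓ v = b) :
    ∃ i : ZMod (2 * m + 1), ℓ (i - 1) + ℓ (i + 1) = ℓ i + ℓ (i + 2) := by
  by_contra! hne
  have hsep : ∀ i, ¬(ℓ i = ℓ (i + 1) ∧ ℓ (i + 2) = ℓ (i + 2 + 1)) := by
    rintro i ⟨h₀, h₂⟩
    apply hne (i + 1)
    rw [add_sub_cancel_right, add_assoc, one_add_one_eq_two, h₀, h₂]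
    ring_nf
  have hnbr : ∀ i, ℓ i = ℓ (i + 1) → ℓ (i - 1) = ℓ (i - 1 + 1) ∨ ℓ (i + 1) = ℓ (i + 1 + 1) := by
    intro i h
    by_contra! hne'
    rw [sub_add_cancel, add_assoc, one_add_one_eq_two] at hne'
    have := hval (i - 1); have := hval i; have := hval (i + 2)
    apply hne i
    omega
  obtain ⟨k, hk⟩ := ZMod.even_card_filter_of_adjacent_pairs (fun j => ℓ j = ℓ (j + 1)) hsep hnbr
  obtain ⟨k', hk'⟩ := ZMod.even_card_filter_ne_add_one_of_two_valued ℓ a b hval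
  have hcard := card_filter_add_card_filter_not (s := univ) (fun j => ℓ j = ℓ (j + 1))
  rw [card_univ, ZMod.card] at hcard
  simp only [ne_eq] at hk'
  omega

/-- on an odd cycle `v₁ v₂ … v_{2m+1}` (vertices indexed by `ZMod (2m+1)`,
each vertex `i` having neighbors `i − 1` and `i + 1`), for any labeling `ℓ` taking only the
two distinct values `a` and `b`, some two adjacent vertices `i` and `i + 1` have equal
neighborhood sums. -/
theorem oddCycle_two_labels_equal_sums (m : ℕ) (hm : 1 ≤ m) (a b : ℕ) (hab : a ≠ b)
    (ℓ : ZMod (2 * m + 1) → ℕ) (hval : ∀ v, ℓ v = a ∨ ℓ v = b) :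
    ∃ i : ZMod (2 * m + 1), ℓ (i - 1) + ℓ (i + 1) = ℓ i + ℓ (i + 2) :=
  oddCycle_two_labels_equal_sums_general m a b ℓ hval
end

section
/- Suppose a graph G with a sigma coloring using labels {α, β} contains, for each of 3n clause-triangles B_c, at least one vertex labeled β, and for each of 3n variable gadgets A_x (each on 46 vertices whose labeling is forced by the label of x, with exactly 16 vertices sharing x's label and 27 plus further vertices otherwise as specified), at least 1/3 of the variables labeled β. Then the number of vertices labeled β is at least 62n, out of 138n total vertices. -/
open Finset
open scoped Classical
open Function

/-!
The triangles and gadgets are pairwise disjoint, so the `β`-vertices they contain are counted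
separately: each of the `3 n` triangles contributes at least one, and a gadget contributes
`16 + 11` or `16` according as its variable is labeled `β` or not. With at least `n` variables
labeled `β` this gives `3 n + 16 · 3 n + 11 n = 62 n`.
-/

theorem Pairwise.disjoint_sumElim {ι κ α : Type*} [PartialOrder α] [OrderBot α]
    {f : ι → α} {g : κ → α} (hf : Pairwise (Disjoint on f)) (hg : Pairwise (Disjoint on g))
    (hfg : ∀ i k, Disjoint (f i) (g k)) : Pairwise (Disjoint on Sum.elim f g) := by
  rintro (i | k) (j | l) hne
  · exact hf fun h => hne (congrArg Sum.inl h)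
  · exact hfg i l
  · exact (hfg j k).symm
  · exact hg fun h => hne (congrArg Sum.inr h)

theorem sum_card_filter_le_card_filter {ι V : Type*} [Fintype ι] [Fintype V]
    {s : ι → Finset V} (hs : Pairwise (Disjoint on s)) (p : V → Prop) [DecidablePred p] :
    ∑ i, #{w ∈ s i | p w} ≤ #{w | p w} := by
  rw [← card_biUnion fun i _ j _ hij => disjoint_filter_filter (hs hij)]
  exact card_le_card (biUnion_subset.2 fun i _ => filter_subset_filter p (subset_univ _))

theorem card_le_sum_card_filter {ι V : Type*} [Fintype ι] {s : ι → Finset V}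
    {p : V → Prop} [DecidablePred p] (h : ∀ i, ∃ w ∈ s i, p w) :
    Fintype.card ι ≤ ∑ i, #{w ∈ s i | p w} := by
  calc Fintype.card ι = ∑ _i : ι, 1 := by simp
    _ ≤ _ := sum_le_sum fun i _ => card_pos.2 <| by simpa [Finset.Nonempty] using h i

theorem sum_ite_eq_mul_card_add_mul_card {ι : Type*} [Fintype ι] (p : ι → Prop)
    [DecidablePred p] (a b : ℕ) :
    ∑ i, (if p i then a else b) = a * #{i | p i} + b * #{i | ¬p i} := by
  rw [sum_ite, sum_const, sum_const, smul_eq_mul, smul_eq_mul, mul_comm a, mul_comm b]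

theorem beta_count_lower_bound_general {V : Type*} [Fintype V] (n : ℕ)
    (ℓ : V → Bool) (B A : Fin (3 * n) → Finset V) (t : Fin (3 * n) → Bool)
    (hBB : ∀ c c', c ≠ c' → Disjoint (B c) (B c'))
    (hAA : ∀ x x', x ≠ x' → Disjoint (A x) (A x'))
    (hBA : ∀ c x, Disjoint (B c) (A x))
    (hβB : ∀ c, ∃ w ∈ B c, ℓ w = true)
    (hβA : ∀ x, ((A x).filter (fun w => ℓ w = true)).card = if t x then 27 else 16)
    (hvar : n ≤ (Finset.univ.filter (fun x => t x = true)).card) :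
    62 * n ≤ (Finset.univ.filter (fun w : V => ℓ w = true)).card := by
  have hdisjoint := sum_card_filter_le_card_filter
    (Pairwise.disjoint_sumElim (fun _ _ => hBB _ _) (fun _ _ => hAA _ _) hBA) (ℓ · = true)
  simp only [Fintype.sum_sum_type, Sum.elim_inl, Sum.elim_inr] at hdisjoint
  have htriangles := card_le_sum_card_filter hβB
  have hgadgets : ∑ x, #{w ∈ A x | ℓ w = true} = 27 * #{x | t x} + 16 * #{x | ¬t x} := by
    simp only [hβA, sum_ite_eq_mul_card_add_mul_card]
  have hvars := card_filter_add_card_filter_not (s := univ) (t · = true)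
  rw [Fintype.card_fin] at htriangles
  rw [card_univ, Fintype.card_fin] at hvars
  omega

/-- counting bound from the proof of Theorem 4: the graph `G_Φ` has `138 n`
vertices, partitioned into `3 n` clause-triangles `B c` (3 vertices each) and `3 n`
variable gadgets `A x` (43 vertices each).  The labeling `ℓ` (with `true` playing the role
of `β`) satisfies: every triangle contains a `β`-vertex; in gadget `A x` the number of
`β`-vertices is `27` if the variable `x` is labeled `β` (`t x = true`) and `16` otherwise
(the gadget's labeling being forced by the label of `x`, with exactly 16 vertices sharing
`x`'s label and 27 carrying the other); and at least a third of the `3 n` variables are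
labeled `β`.  Then at least `62 n` of the `138 n` vertices are labeled `β`. -/
theorem beta_count_lower_bound {V : Type*} [Fintype V] (n : ℕ)
    (hV : Fintype.card V = 138 * n)
    (ℓ : V → Bool) (B A : Fin (3 * n) → Finset V) (t : Fin (3 * n) → Bool)
    (hBcard : ∀ c, (B c).card = 3) (hAcard : ∀ x, (A x).card = 43)
    (hBB : ∀ c c', c ≠ c' → Disjoint (B c) (B c'))
    (hAA : ∀ x x', x ≠ x' → Disjoint (A x) (A x'))
    (hBA : ∀ c x, Disjoint (B c) (A x))
    (hβB : ∀ c, ∃ w ∈ B c, ℓ w = true)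
    (hβA : ∀ x, ((A x).filter (fun w => ℓ w = true)).card = if t x then 27 else 16)
    (hvar : n ≤ (Finset.univ.filter (fun x => t x = true)).card) :
    62 * n ≤ (Finset.univ.filter (fun w : V => ℓ w = true)).card :=
  beta_count_lower_bound_general n ℓ B A t hBB hAA hBA hβB hβA hvar
end
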